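/- If G_1 and G_2 are graphs with γ_gr^t(G_i) = 2·bc(G_i) for i = 1,2, then γ_gr^t(G_1 × G_2) = 2·bc(G_1 × G_2). -/

import Mathlib

open SimpleGraph

/-- A legal open neighborhood sequence in `G`. -/
def IsOpenLegal {α : Type*} (G : SimpleGraph α) (L : List α) : Prop :=
  L.Nodup ∧ ∀ i : Fin L.length, ∃ w, G.Adj (L.get i) w ∧
    ∀ j : Fin L.length, j < i → ¬ G.Adj (L.get j) w

/-- The Grundy total domination number of `G`. -/
noncomputable def grundyT {α : Type*} (G : SimpleGraph α) : ℕ :=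
  sSup {n | ∃ L : List α, IsOpenLegal G L ∧ L.length = n}

/-- A legal closed neighborhood (dominating) sequence in `G`. -/
def IsClosedLegal {α : Type*} (G : SimpleGraph α) (L : List α) : Prop :=
  L.Nodup ∧ ∀ i : Fin L.length, ∃ w, (G.Adj (L.get i) w ∨ L.get i = w) ∧
    ∀ j : Fin L.length, j < i → ¬ (G.Adj (L.get j) w ∨ L.get j = w)

/-- The Grundy domination number of `G`. -/
noncomputable def grundyDom {α : Type*} (G : SimpleGraph α) : ℕ :=
  sSup {n | ∃ L : List α, IsClosedLegal G L ∧ L.length = n}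

/-- The direct (tensor) product of simple graphs. -/
def directProd {α β : Type*} (G : SimpleGraph α) (H : SimpleGraph β) : SimpleGraph (α × β) where
  Adj x y := G.Adj x.1 y.1 ∧ H.Adj x.2 y.2
  symm := ⟨fun _ _ h => ⟨h.1.symm, h.2.symm⟩⟩
  loopless := ⟨fun x h => G.irrefl h.1⟩

/-- The lexicographic product of simple graphs. -/
def lexProd {α β : Type*} (G : SimpleGraph α) (H : SimpleGraph β) : SimpleGraph (α × β) where
  Adj x y := G.Adj x.1 y.1 ∨ (x.1 = y.1 ∧ H.Adj x.2 y.2)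
  symm := by
    constructor
    rintro x y (h | ⟨h1, h2⟩)
    · exact Or.inl h.symm
    · exact Or.inr ⟨h1.symm, h2.symm⟩
  loopless := by
    constructor
    rintro x (h | ⟨_, h⟩)
    · exact G.irrefl h
    · exact H.irrefl h

/-- The strong product of simple graphs. -/
def strongProd {α β : Type*} (G : SimpleGraph α) (H : SimpleGraph β) : SimpleGraph (α × β) where
  Adj x y := (G.Adj x.1 y.1 ∧ x.2 = y.2) ∨ (x.1 = y.1 ∧ H.Adj x.2 y.2) ∨
    (G.Adj x.1 y.1 ∧ H.Adj x.2 y.2)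
  symm := by
    constructor
    rintro x y (⟨h, e⟩ | ⟨e, h⟩ | ⟨h1, h2⟩)
    · exact Or.inl ⟨h.symm, e.symm⟩
    · exact Or.inr (Or.inl ⟨e.symm, h.symm⟩)
    · exact Or.inr (Or.inr ⟨h1.symm, h2.symm⟩)
  loopless := by
    constructor
    rintro x (⟨h, _⟩ | ⟨_, h⟩ | ⟨h, _⟩)
    · exact G.irrefl h
    · exact H.irrefl h
    · exact G.irrefl h

/-- The minimum number of complete bipartite subgraphs of `G` covering all edges of `G`. -/
noncomputable def bc {α : Type*} (G : SimpleGraph α) : ℕ :=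
  sInf {k | ∃ A B : Fin k → Set α,
    (∀ i a b, a ∈ A i → b ∈ B i → G.Adj a b) ∧
    (∀ u v, G.Adj u v → ∃ i, (u ∈ A i ∧ v ∈ B i) ∨ (v ∈ A i ∧ u ∈ B i))}

/-- `aD G L` is the number of entries of `L` not adjacent to any earlier entry. -/
noncomputable def aD {α : Type*} (G : SimpleGraph α) (L : List α) : ℕ :=
  {i : Fin L.length | ∀ j : Fin L.length, j < i → ¬ G.Adj (L.get j) (L.get i)}.ncard

/-- The vertex cover number of `G`. -/
noncomputable def vertexCoverNum {α : Type*} (G : SimpleGraph α) : ℕ :=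
  sInf {n | ∃ S : Finset α, S.card = n ∧ ∀ u v, G.Adj u v → u ∈ S ∨ v ∈ S}

/-- The independence number of `G`. -/
noncomputable def indepNum {α : Type*} (G : SimpleGraph α) : ℕ :=
  sSup {n | ∃ S : Finset α, S.card = n ∧ ∀ u ∈ S, ∀ v ∈ S, ¬ G.Adj u v}

/-!
A legal sequence of `G` pairs each vertex `vᵢ` with a neighbour `wᵢ` not adjacent to any earlier
`vⱼ`; the edge `vᵢwᵢ` lies in some biclique of a cover, with `vᵢ` on a definite side. Two vertices
of the sequence cannot give the same biclique and side, since `wᵢ` would then be adjacent to the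
earlier vertex. Hence `γ_gr^t(G) ≤ 2 bc(G)` for every finite graph. Conversely,
the lexicographically ordered product of legal sequences of `G₁` and `G₂` is legal in `G₁ × G₂`,
and a biclique cover of size `k₁` of `G₁` and one of size `k₂` of `G₂` give one of size `2k₁k₂`
of `G₁ × G₂`, as the product of two bicliques splits into two bicliques. Thus
`2 bc(G₁ × G₂) ≤ 4 bc(G₁) bc(G₂) = γ_gr^t(G₁) γ_gr^t(G₂) ≤ γ_gr^t(G₁ × G₂) ≤ 2 bc(G₁ × G₂)`.
-/

section

variable {α β ι κ : Type*}

-- Stated so that `bc G` unfolds to `sInf {k | ∃ A B : Fin k → Set α, IsBicliqueCover G A B}`.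
def IsBicliqueCover (G : SimpleGraph α) (A B : ι → Set α) : Prop :=
  (∀ i a b, a ∈ A i → b ∈ B i → G.Adj a b) ∧
    (∀ u v, G.Adj u v → ∃ i, (u ∈ A i ∧ v ∈ B i) ∨ (v ∈ A i ∧ u ∈ B i))

namespace IsBicliqueCover

variable {G : SimpleGraph α} {A B : ι → Set α}

theorem comp_equiv (h : IsBicliqueCover G A B) (e : κ ≃ ι) :
    IsBicliqueCover G (A ∘ e) (B ∘ e) := by
  refine ⟨fun i => h.1 (e i), fun u v huv => ?_⟩
  obtain ⟨i, hi⟩ := h.2 u v huv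
  exact ⟨e.symm i, by simpa using hi⟩

theorem bc_le [Finite ι] (h : IsBicliqueCover G A B) : bc G ≤ Nat.card ι :=
  Nat.sInf_le ⟨_, _, h.comp_equiv (Finite.equivFin ι).symm⟩

theorem directProd {H : SimpleGraph β} {C D : κ → Set β} (hG : IsBicliqueCover G A B)
    (hH : IsBicliqueCover H C D) :
    IsBicliqueCover (directProd G H)
      (fun p : ι × κ × Bool => A p.1 ×ˢ (if p.2.2 then C p.2.1 else D p.2.1))
      (fun p => B p.1 ×ˢ (if p.2.2 then D p.2.1 else C p.2.1)) := by
  refine ⟨fun ⟨i, j, s⟩ a b ha hb => ?_, fun ⟨u, x⟩ ⟨v, y⟩ ⟨huv, hxy⟩ => ?_⟩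
  · refine ⟨hG.1 i _ _ ha.1 hb.1, ?_⟩
    cases s
    · exact (hH.1 j _ _ hb.2 ha.2).symm
    · exact hH.1 j _ _ ha.2 hb.2
  · obtain ⟨i, hi⟩ := hG.2 u v huv
    obtain ⟨j, hj⟩ := hH.2 x y hxy
    rcases hi with ⟨hu, hv⟩ | ⟨hv, hu⟩ <;> rcases hj with ⟨hx, hy⟩ | ⟨hy, hx⟩
    · exact ⟨(i, j, true), Or.inl ⟨⟨hu, hx⟩, hv, hy⟩⟩
    · exact ⟨(i, j, false), Or.inl ⟨⟨hu, hx⟩, hv, hy⟩⟩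
    · exact ⟨(i, j, false), Or.inr ⟨⟨hv, hy⟩, hu, hx⟩⟩
    · exact ⟨(i, j, true), Or.inr ⟨⟨hv, hy⟩, hu, hx⟩⟩

end IsBicliqueCover

theorem isBicliqueCover_edges (G : SimpleGraph α) :
    IsBicliqueCover G (fun e : {p : α × α // G.Adj p.1 p.2} => {e.1.1}) (fun e => {e.1.2}) :=
  ⟨fun e a b ha hb => by rw [ha, hb]; exact e.2, fun u v huv => ⟨⟨(u, v), huv⟩, Or.inl ⟨rfl, rfl⟩⟩⟩

theorem exists_isBicliqueCover_bc [Finite α] (G : SimpleGraph α) :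
    ∃ A B : Fin (bc G) → Set α, IsBicliqueCover G A B :=
  Nat.sInf_mem (s := {k | ∃ A B : Fin k → Set α, IsBicliqueCover G A B})
    ⟨_, _, _, (isBicliqueCover_edges G).comp_equiv (Finite.equivFin _).symm⟩

theorem bc_directProd_le [Finite α] [Finite β] (G : SimpleGraph α) (H : SimpleGraph β) :
    bc (directProd G H) ≤ 2 * bc G * bc H := by
  obtain ⟨A, B, hG⟩ := exists_isBicliqueCover_bc G
  obtain ⟨C, D, hH⟩ := exists_isBicliqueCover_bc H
  calc bc (directProd G H) ≤ Nat.card (Fin (bc G) × Fin (bc H) × Bool) :=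
        (hG.directProd hH).bc_le
    _ = 2 * bc G * bc H := by simp; ring

theorem IsOpenLegal.length_le_two_mul_card [Finite ι] {G : SimpleGraph α} {L : List α}
    (hL : IsOpenLegal G L) {A B : ι → Set α} (hcov : IsBicliqueCover G A B) :
    L.length ≤ 2 * Nat.card ι := by
  classical
  choose w hadj hnew using hL.2
  choose φ hφ using fun i => hcov.2 _ _ (hadj i)
  let side : Fin L.length → ι × Bool := fun i => (φ i, decide (L.get i ∈ A (φ i) ∧ w i ∈ B (φ i)))
  have side_ne : ∀ i j, j < i → side i ≠ side j := by
    intro i j hji hij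
    simp only [side, Prod.ext_iff, decide_eq_decide] at hij
    obtain ⟨hφij, hside⟩ := hij
    by_cases hj : L.get j ∈ A (φ j) ∧ w j ∈ B (φ j)
    · have hi := hside.2 hj
      exact hnew i j hji (hcov.1 _ _ _ hj.1 (hφij ▸ hi.2))
    · have hi := (hφ i).resolve_left (mt hside.1 hj)
      have hj := (hφ j).resolve_left hj
      exact hnew i j hji (hcov.1 _ _ _ hi.1 (hφij ▸ hj.2)).symm
  have side_injective : Function.Injective side := by
    intro i j hij
    by_contra hne
    rcases lt_or_gt_of_ne hne with h | h
    · exact side_ne j i h hij.symm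
    · exact side_ne i j h hij
  calc L.length = Nat.card (Fin L.length) := (Nat.card_fin _).symm
    _ ≤ Nat.card (ι × Bool) := Nat.card_le_card_of_injective side side_injective
    _ = 2 * Nat.card ι := by simp [Nat.card_prod, mul_comm]

theorem isOpenLegal_nil (G : SimpleGraph α) : IsOpenLegal G [] :=
  ⟨List.nodup_nil, nofun⟩

theorem grundyT_le_two_mul_bc [Finite α] (G : SimpleGraph α) : grundyT G ≤ 2 * bc G := by
  obtain ⟨A, B, hcov⟩ := exists_isBicliqueCover_bc G
  refine csSup_le ⟨0, [], isOpenLegal_nil G, rfl⟩ ?_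
  rintro n ⟨L, hL, rfl⟩
  simpa using hL.length_le_two_mul_card hcov

def IsOpenLegalSeq [LT ι] (G : SimpleGraph α) (v : ι → α) : Prop :=
  Function.Injective v ∧ ∀ i, ∃ w, G.Adj (v i) w ∧ ∀ j < i, ¬ G.Adj (v j) w

theorem isOpenLegal_iff_isOpenLegalSeq_get {G : SimpleGraph α} {L : List α} :
    IsOpenLegal G L ↔ IsOpenLegalSeq G L.get := by
  rw [IsOpenLegal, List.nodup_iff_injective_get]
  rfl

namespace IsOpenLegalSeq

variable {G : SimpleGraph α}

theorem comp_orderIso [Preorder ι] [Preorder κ] {v : ι → α} (hv : IsOpenLegalSeq G v)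
    (e : κ ≃o ι) : IsOpenLegalSeq G (v ∘ e) := by
  refine ⟨hv.1.comp e.injective, fun i => ?_⟩
  obtain ⟨w, hadj, hnew⟩ := hv.2 (e i)
  exact ⟨w, hadj, fun j hji => hnew (e j) (e.lt_iff_lt.2 hji)⟩

theorem directProd [LT ι] [LT κ] {H : SimpleGraph β} {v : ι → α} {u : κ → β}
    (hv : IsOpenLegalSeq G v) (hu : IsOpenLegalSeq H u) :
    IsOpenLegalSeq (directProd G H) (fun p : ι ×ₗ κ => (v (ofLex p).1, u (ofLex p).2)) := by
  refine ⟨fun p q hpq => ?_, fun p => ?_⟩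
  · simp only [Prod.mk.injEq] at hpq
    exact ofLex.injective (Prod.ext (hv.1 hpq.1) (hu.1 hpq.2))
  obtain ⟨w, hvw, hv_new⟩ := hv.2 (ofLex p).1
  obtain ⟨z, huz, hu_new⟩ := hu.2 (ofLex p).2
  refine ⟨(w, z), ⟨hvw, huz⟩, fun q hqp hadj => ?_⟩
  rcases Prod.Lex.lt_iff.1 hqp with h | ⟨h, h'⟩
  · exact hv_new _ h hadj.1
  · exact hu_new _ h' hadj.2

theorem exists_isOpenLegal_length_eq [LinearOrder ι] [Fintype ι] {v : ι → α}
    (hv : IsOpenLegalSeq G v) : ∃ L, IsOpenLegal G L ∧ L.length = Fintype.card ι := by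
  let e := Fintype.orderIsoFinOfCardEq ι rfl
  refine ⟨List.ofFn (v ∘ e), ?_, List.length_ofFn⟩
  rw [isOpenLegal_iff_isOpenLegalSeq_get]
  have hget : (List.ofFn (v ∘ e)).get = v ∘ e ∘ Fin.castOrderIso List.length_ofFn := by
    funext i
    exact List.get_ofFn _ i
  rw [hget]
  exact (hv.comp_orderIso e).comp_orderIso _

end IsOpenLegalSeq

theorem bddAbove_length_isOpenLegal [Finite α] (G : SimpleGraph α) :
    BddAbove {n | ∃ L : List α, IsOpenLegal G L ∧ L.length = n} := by
  have := Fintype.ofFinite α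
  exact ⟨Fintype.card α, fun _ ⟨L, hL, hlen⟩ => hlen ▸ hL.1.length_le_card⟩

theorem exists_isOpenLegal_length_eq_grundyT [Finite α] (G : SimpleGraph α) :
    ∃ L, IsOpenLegal G L ∧ L.length = grundyT G :=
  Nat.sSup_mem (s := {n | ∃ L : List α, IsOpenLegal G L ∧ L.length = n})
    ⟨0, [], isOpenLegal_nil G, rfl⟩ (bddAbove_length_isOpenLegal G)

theorem grundyT_mul_le_grundyT_directProd [Finite α] [Finite β] (G : SimpleGraph α)
    (H : SimpleGraph β) : grundyT G * grundyT H ≤ grundyT (directProd G H) := by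
  obtain ⟨L, hL, hLlen⟩ := exists_isOpenLegal_length_eq_grundyT G
  obtain ⟨M, hM, hMlen⟩ := exists_isOpenLegal_length_eq_grundyT H
  have hLM := (isOpenLegal_iff_isOpenLegalSeq_get.1 hL).directProd
    (isOpenLegal_iff_isOpenLegalSeq_get.1 hM)
  obtain ⟨S, hS, hSlen⟩ := hLM.exists_isOpenLegal_length_eq
  refine le_csSup (bddAbove_length_isOpenLegal _) ⟨S, hS, ?_⟩
  rw [hSlen, ← hLlen, ← hMlen]
  simp

end

theorem grundyT_directProd_eq_two_bc {α β : Type*} [Fintype α] [Fintype β]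
    (G₁ : SimpleGraph α) (G₂ : SimpleGraph β)
    (h₁ : grundyT G₁ = 2 * bc G₁) (h₂ : grundyT G₂ = 2 * bc G₂) :
    grundyT (directProd G₁ G₂) = 2 * bc (directProd G₁ G₂) := by
  refine le_antisymm (grundyT_le_two_mul_bc _) ?_
  calc 2 * bc (directProd G₁ G₂) ≤ 2 * (2 * bc G₁ * bc G₂) := by
        gcongr; exact bc_directProd_le G₁ G₂
    _ = 2 * bc G₁ * (2 * bc G₂) := by ring
    _ = grundyT G₁ * grundyT G₂ := by rw [h₁, h₂]
    _ ≤ grundyT (directProd G₁ G₂) := grundyT_mul_le_grundyT_directProd G₁ G₂
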